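/- arXiv:1011.1427 — 4 statements merged into one kernel-verified Lean document; each statement's English description precedes it below -/
import Mathlib

section
/- For every integer r ≥ 1 and every finite-dimensional subspace C ⊆ 𝒞^(r), there exists a nonzero polynomial p ∈ Polynomial ℂ such that p·P^r ⊆ V_C, i.e. c(fun k => p * m k) = 0 for every c ∈ C and every m ∈ P^r. -/
open Polynomial

/-- The evaluation functional `e_{k,s,λ}` on `P^r = Fin r → ℂ[X]`. -/
noncomputable def evalFunctional (r : ℕ) (k : Fin r) (s : ℕ) (l : ℂ) :
    Module.Dual ℂ (Fin r → Polynomial ℂ) :=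
  Polynomial.leval l ∘ₗ
    ((Polynomial.derivative : Polynomial ℂ →ₗ[ℂ] Polynomial ℂ) ^ s) ∘ₗ
      LinearMap.proj k

/-- `𝒞^(r)`: the span of all the evaluation functionals. -/
noncomputable def conditionsSpace (r : ℕ) :
    Submodule ℂ (Module.Dual ℂ (Fin r → Polynomial ℂ)) :=
  Submodule.span ℂ
    (Set.range fun ksl : Fin r × ℕ × ℂ => evalFunctional r ksl.1 ksl.2.1 ksl.2.2)

lemma eval_iterate_derivative_of_dvd {s : ℕ} {l : ℂ} {q : Polynomial ℂ}
    (h : (X - Polynomial.C l) ^ (s + 1) ∣ q) :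
    ((Polynomial.derivative^[s]) q).eval l = 0 := by
  rcases eq_or_ne q 0 with rfl | hq
  · simp
  · have hlt : s < q.rootMultiplicity l := by
      rw [Nat.lt_iff_add_one_le, Polynomial.le_rootMultiplicity_iff hq]
      exact h
    exact Polynomial.isRoot_iterate_derivative_of_lt_rootMultiplicity hlt

/-- Each single element of `conditionsSpace` is killed by multiplication by
a suitable nonzero polynomial. -/
lemma exists_poly_of_mem_conditionsSpace (r : ℕ)
    (c : Module.Dual ℂ (Fin r → Polynomial ℂ)) (hc : c ∈ conditionsSpace r) :
    ∃ p : Polynomial ℂ, p ≠ 0 ∧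
      ∀ m : Fin r → Polynomial ℂ, c (fun k => p * m k) = 0 := by
  induction hc using Submodule.span_induction with
  | mem x hx =>
      obtain ⟨⟨k, s, l⟩, rfl⟩ := hx
      refine ⟨(X - Polynomial.C l) ^ (s + 1), pow_ne_zero _ (X_sub_C_ne_zero l), fun m => ?_⟩
      simp only [evalFunctional, LinearMap.coe_comp, Function.comp_apply,
        Module.End.pow_apply, LinearMap.proj_apply, Polynomial.leval_apply]
      exact eval_iterate_derivative_of_dvd ⟨m k, rfl⟩
  | zero => exact ⟨1, one_ne_zero, fun m => rfl⟩
  | add x y hx hy ihx ihy =>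
      obtain ⟨p, hp, hpx⟩ := ihx
      obtain ⟨q, hq, hqy⟩ := ihy
      refine ⟨p * q, mul_ne_zero hp hq, fun m => ?_⟩
      have h1 : x (fun k => p * q * m k) = 0 := by
        have := hpx (fun k => q * m k); simpa [mul_assoc] using this
      have h2 : y (fun k => p * q * m k) = 0 := by
        have := hqy (fun k => p * m k)
        simpa [mul_assoc, mul_left_comm p q] using this
      simp [h1, h2]
  | smul a x hx ihx =>
      obtain ⟨p, hp, hpx⟩ := ihx
      exact ⟨p, hp, fun m => by simp [hpx m]⟩

/-- for every finite-dimensional subspace `C ⊆ 𝒞^(r)` there is a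
nonzero polynomial `p` with `p·P^r ⊆ V_C`, i.e. every element of `C` kills
every tuple of the form `(p * m k)_k`. -/
theorem exists_poly_mul_mem_annihilator (r : ℕ) (hr : 1 ≤ r)
    (C : Submodule ℂ (Module.Dual ℂ (Fin r → Polynomial ℂ)))
    (hC : C ≤ conditionsSpace r) (hfin : FiniteDimensional ℂ C) :
    ∃ p : Polynomial ℂ, p ≠ 0 ∧
      ∀ c ∈ C, ∀ m : Fin r → Polynomial ℂ, c (fun k => p * m k) = 0 := by
  classical
  obtain ⟨n, f, hf⟩ := Module.Finite.exists_fin (R := ℂ) (M := C)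
  choose P hP0 hPkill using fun i : Fin n =>
    exists_poly_of_mem_conditionsSpace r ((f i : C) : Module.Dual ℂ (Fin r → Polynomial ℂ))
      (hC (f i).2)
  refine ⟨∏ i, P i, Finset.prod_ne_zero_iff.2 fun i _ => hP0 i, fun c hc m => ?_⟩
  -- C is the span of the images of f
  have hC' : C = Submodule.span ℂ (((↑) : C → Module.Dual ℂ (Fin r → Polynomial ℂ)) '' Set.range f) := by
    conv_lhs => rw [← Submodule.map_subtype_top C, ← hf]
    rw [Submodule.map_span]
    rfl
  rw [hC'] at hc
  induction hc using Submodule.span_induction with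
  | mem x hx =>
      obtain ⟨y, ⟨i, rfl⟩, rfl⟩ := hx
      obtain ⟨q, hq⟩ := Finset.dvd_prod_of_mem P (Finset.mem_univ i)
      have := hPkill i (fun k => q * m k)
      simpa [hq, mul_assoc] using this
  | zero => rfl
  | add x y hx hy ihx ihy => simp [ihx, ihy]
  | smul a x hx ihx => simp [ihx]
end

section
/- Let r ≥ 1 and let W be a ℂ-subspace of R^r such that p·P^r ⊆ W ⊆ q⁻¹·P^r for some nonzero polynomials p and q. Then there exists a finite-dimensional subspace C ⊆ 𝒞^(r) such that W = q⁻¹·V_C (equivalently, q·W = V_C), and moreover finrank ℂ C = finrank ℂ ((q⁻¹·P^r) ⧸ W). -/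
open Polynomial

/-- The annihilator `V_C ⊆ P^r` of a space of conditions `C`. -/
noncomputable def annihilatorOfConditions (r : ℕ)
    (C : Submodule ℂ (Module.Dual ℂ (Fin r → Polynomial ℂ))) :
    Submodule ℂ (Fin r → Polynomial ℂ) where
  carrier := {p | ∀ c ∈ C, c p = 0}
  add_mem' := fun hp hq c hc => by rw [map_add, hp c hc, hq c hc, add_zero]
  zero_mem' := fun c _ => map_zero c
  smul_mem' := fun a p hp c hc => by rw [map_smul, hp c hc, smul_zero]

/-- The componentwise embedding `P^r → R^r` of tuples of polynomials into
tuples of rational functions. -/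
noncomputable def polyToRat (r : ℕ) :
    (Fin r → Polynomial ℂ) →ₗ[ℂ] (Fin r → RatFunc ℂ) :=
  LinearMap.pi fun k =>
    (IsScalarTower.toAlgHom ℂ (Polynomial ℂ) (RatFunc ℂ)).toLinearMap ∘ₗ
      LinearMap.proj k

/-- Componentwise multiplication by a fixed rational function `f` on `R^r`. -/
noncomputable def ratScale (r : ℕ) (f : RatFunc ℂ) :
    (Fin r → RatFunc ℂ) →ₗ[ℂ] (Fin r → RatFunc ℂ) :=
  LinearMap.pi fun k => LinearMap.mulLeft ℂ f ∘ₗ LinearMap.proj k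

/-- `P^r` regarded as a subspace of `R^r`. -/
noncomputable def polySubmodule (r : ℕ) : Submodule ℂ (Fin r → RatFunc ℂ) :=
  LinearMap.range (polyToRat r)

/-- The image `f·U` of a subspace `U ⊆ R^r` under componentwise
multiplication by the rational function `f`. -/
noncomputable def scaleSub (r : ℕ) (f : RatFunc ℂ)
    (U : Submodule ℂ (Fin r → RatFunc ℂ)) : Submodule ℂ (Fin r → RatFunc ℂ) :=
  Submodule.map (ratScale r f) U

/-- `V_C` regarded as a subspace of `R^r`. -/
noncomputable def annihilatorInRat (r : ℕ)
    (C : Submodule ℂ (Module.Dual ℂ (Fin r → Polynomial ℂ))) :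
    Submodule ℂ (Fin r → RatFunc ℂ) :=
  Submodule.map (polyToRat r) (annihilatorOfConditions r C)


/-!
Put `U := {f ∈ P^r : q⁻¹·f ∈ W}`, so that `qp·P^r ⊆ U ⊆ P^r` and `W = q⁻¹·U`. A tuple on which
every `e_{k,s,λ}` with `λ` a root of `qp` and `s ≤ deg (qp)` vanishes is componentwise divisible
by `qp`, hence lies in `U`; so every functional vanishing on `U` is a combination of these finitely
many conditions. Take `C` to be the full annihilator of `U` in the dual: it lies in `𝒞^(r)`, is
finite-dimensional, its annihilator is `U` by duality, and `C ≅ (P^r ⧸ U)^* ≅ ((q⁻¹·P^r) ⧸ W)^*`.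
-/

theorem Polynomial.Splits.dvd_of_iterate_derivative_eval_eq_zero {K : Type*} [Field K]
    [CharZero K] {m f : K[X]} (hsplit : m.Splits) (hm : m ≠ 0)
    (h : ∀ l ∈ m.roots, ∀ s < m.rootMultiplicity l, (derivative^[s] f).eval l = 0) :
    m ∣ f := by
  classical
  rcases eq_or_ne f 0 with rfl | hf
  · exact dvd_zero m
  refine hsplit.dvd_of_roots_le_roots hm (Multiset.le_iff_count.mpr fun l => ?_)
  rw [count_roots, count_roots]
  rcases Nat.eq_zero_or_pos (m.rootMultiplicity l) with h0 | hpos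
  · omega
  have hl : l ∈ m.roots := (mem_roots hm).mpr ((rootMultiplicity_pos hm).mp hpos)
  have hlt := (lt_rootMultiplicity_iff_isRoot_iterate_derivative hf
    (n := m.rootMultiplicity l - 1)).mpr fun s hs => h l hl s (by omega)
  omega

theorem Subspace.finrank_dualAnnihilator_eq_finrank_quotient {K V : Type*} [Field K]
    [AddCommGroup V] [Module K V] (U : Subspace K V) :
    Module.finrank K U.dualAnnihilator = Module.finrank K (V ⧸ U) :=
  (Submodule.dualQuotEquivDualAnnihilator U).finrank_eq.symm.trans Subspace.dual_finrank_eq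

theorem LinearMap.finrank_quotient_comap_eq {R M N : Type*} [Ring R] [AddCommGroup M]
    [Module R M] [AddCommGroup N] [Module R N] {f : M →ₗ[R] N} (hf : Function.Injective f)
    (W : Submodule R N) :
    Module.finrank R (M ⧸ W.comap f) =
      Module.finrank R (LinearMap.range f ⧸ W.comap (LinearMap.range f).subtype) := by
  refine (Submodule.Quotient.equiv _ _ (LinearEquiv.ofInjective f hf) ?_).finrank_eq
  ext ⟨_, x, rfl⟩
  simp

noncomputable def rootConditions (r : ℕ) (m : ℂ[X]) :
    Fin r × m.roots.toFinset × Fin (m.natDegree + 1) → Module.Dual ℂ (Fin r → ℂ[X]) :=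
  fun i => evalFunctional r i.1 i.2.2 i.2.1

instance (r : ℕ) (m : ℂ[X]) :
    FiniteDimensional ℂ (Submodule.span ℂ (Set.range (rootConditions r m))) :=
  FiniteDimensional.span_of_finite ℂ (Set.finite_range _)

theorem span_rootConditions_le_conditionsSpace (r : ℕ) (m : ℂ[X]) :
    Submodule.span ℂ (Set.range (rootConditions r m)) ≤ conditionsSpace r :=
  Submodule.span_mono <| Set.range_subset_iff.mpr fun i => ⟨(i.1, i.2.2, i.2.1), rfl⟩

theorem exists_eq_smul_of_mem_iInf_ker_rootConditions {r : ℕ} {m : ℂ[X]} (hm : m ≠ 0)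
    {f : Fin r → ℂ[X]} (hf : f ∈ ⨅ i, LinearMap.ker (rootConditions r m i)) :
    ∃ g : Fin r → ℂ[X], f = m • g := by
  have hdvd (k : Fin r) : m ∣ f k := by
    refine (IsAlgClosed.splits m).dvd_of_iterate_derivative_eval_eq_zero hm fun l hl s hs => ?_
    have hs' : s < m.natDegree + 1 := by
      have hmult := (Multiset.count_le_card l m.roots).trans (card_roots' m)
      rw [count_roots] at hmult
      omega
    have hroot := Submodule.mem_iInf _ |>.mp hf (k, ⟨l, Multiset.mem_toFinset.mpr hl⟩, ⟨s, hs'⟩)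
    simpa [rootConditions, evalFunctional, Module.End.pow_apply] using LinearMap.mem_ker.mp hroot
  choose g hg using hdvd
  exact ⟨g, funext hg⟩

theorem dualAnnihilator_le_span_rootConditions {r : ℕ} {m : ℂ[X]} (hm : m ≠ 0)
    {U : Submodule ℂ (Fin r → ℂ[X])} (hU : ∀ f, m • f ∈ U) :
    U.dualAnnihilator ≤ Submodule.span ℂ (Set.range (rootConditions r m)) := by
  intro φ hφ
  refine mem_span_of_iInf_ker_le_ker fun f hf => ?_
  obtain ⟨g, rfl⟩ := exists_eq_smul_of_mem_iInf_ker_rootConditions hm hf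
  exact (Submodule.mem_dualAnnihilator φ).mp hφ _ (hU g)

theorem annihilatorOfConditions_eq_dualCoannihilator (r : ℕ)
    (C : Submodule ℂ (Module.Dual ℂ (Fin r → ℂ[X]))) :
    annihilatorOfConditions r C = C.dualCoannihilator := by
  ext f
  exact (Submodule.mem_dualCoannihilator f).symm

theorem polyToRat_injective (r : ℕ) : Function.Injective (polyToRat r) :=
  fun _ _ h => funext fun k => RatFunc.algebraMap_injective ℂ (congrFun h k)

theorem ratScale_injective (r : ℕ) {f : RatFunc ℂ} (hf : f ≠ 0) :
    Function.Injective (ratScale r f) :=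
  fun _ _ h => funext fun k => mul_left_cancel₀ hf (congrFun h k)

theorem scaleSub_scaleSub_inv (r : ℕ) {f : RatFunc ℂ} (hf : f ≠ 0)
    (U : Submodule ℂ (Fin r → RatFunc ℂ)) : scaleSub r f (scaleSub r f⁻¹ U) = U := by
  rw [scaleSub, scaleSub, ← Submodule.map_comp]
  convert Submodule.map_id U
  ext x k
  simp [ratScale, hf]

theorem ratScale_inv_polyToRat_mul_smul (r : ℕ) {q : ℂ[X]} (hq : q ≠ 0) (p : ℂ[X])
    (f : Fin r → ℂ[X]) :
    ratScale r (algebraMap ℂ[X] (RatFunc ℂ) q)⁻¹ (polyToRat r ((q * p) • f)) =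
      ratScale r (algebraMap ℂ[X] (RatFunc ℂ) p) (polyToRat r f) := by
  funext k
  change _ * algebraMap ℂ[X] (RatFunc ℂ) (q * p * f k) = _ * algebraMap ℂ[X] (RatFunc ℂ) (f k)
  rw [map_mul, map_mul, mul_assoc, inv_mul_cancel_left₀ (RatFunc.algebraMap_ne_zero hq)]

theorem exists_conditions_of_sandwiched_general (r : ℕ)
    (W : Submodule ℂ (Fin r → RatFunc ℂ)) (p q : Polynomial ℂ)
    (hp : p ≠ 0) (hq : q ≠ 0)
    (hpW : scaleSub r (algebraMap (Polynomial ℂ) (RatFunc ℂ) p)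
      (polySubmodule r) ≤ W)
    (hWq : W ≤ scaleSub r (algebraMap (Polynomial ℂ) (RatFunc ℂ) q)⁻¹
      (polySubmodule r)) :
    letI qinvP : Submodule ℂ (Fin r → RatFunc ℂ) :=
      scaleSub r (algebraMap (Polynomial ℂ) (RatFunc ℂ) q)⁻¹ (polySubmodule r)
    ∃ C : Submodule ℂ (Module.Dual ℂ (Fin r → Polynomial ℂ)),
      C ≤ conditionsSpace r ∧ FiniteDimensional ℂ C ∧
      W = scaleSub r (algebraMap (Polynomial ℂ) (RatFunc ℂ) q)⁻¹
            (annihilatorInRat r C) ∧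
      scaleSub r (algebraMap (Polynomial ℂ) (RatFunc ℂ) q) W =
        annihilatorInRat r C ∧
      Module.finrank ℂ C =
        Module.finrank ℂ (↥qinvP ⧸ Submodule.comap qinvP.subtype W) := by
  set Q := algebraMap ℂ[X] (RatFunc ℂ) q
  have hQ : Q ≠ 0 := RatFunc.algebraMap_ne_zero hq
  let g := ratScale r Q⁻¹ ∘ₗ polyToRat r
  have hg : Function.Injective g :=
    (ratScale_injective r (inv_ne_zero hQ)).comp (polyToRat_injective r)
  have hrange : LinearMap.range g = scaleSub r Q⁻¹ (polySubmodule r) := by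
    rw [LinearMap.range_comp]; rfl
  set U := W.comap g
  have hU (f : Fin r → ℂ[X]) : (q * p) • f ∈ U := by
    have := hpW (Submodule.mem_map_of_mem (LinearMap.mem_range_self (polyToRat r) f))
    rwa [← ratScale_inv_polyToRat_mul_smul r hq] at this
  have hUC := dualAnnihilator_le_span_rootConditions (mul_ne_zero hq hp) hU
  have hWU : scaleSub r Q⁻¹ (annihilatorInRat r U.dualAnnihilator) = W := by
    rw [annihilatorInRat, annihilatorOfConditions_eq_dualCoannihilator,
      Subspace.dualAnnihilator_dualCoannihilator_eq, scaleSub, ← Submodule.map_comp]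
    exact Submodule.map_comap_eq_of_le (hrange ▸ hWq)
  refine ⟨U.dualAnnihilator, hUC.trans (span_rootConditions_le_conditionsSpace r _),
    Submodule.finiteDimensional_of_le hUC, hWU.symm, ?_, ?_⟩
  · rw [← hWU, scaleSub_scaleSub_inv r hQ]
  · rw [Subspace.finrank_dualAnnihilator_eq_finrank_quotient,
      LinearMap.finrank_quotient_comap_eq hg, hrange]

/-- if `p·P^r ⊆ W ⊆ q⁻¹·P^r` for nonzero polynomials `p, q`, then
there is a finite-dimensional space of conditions `C ⊆ 𝒞^(r)` with
`W = q⁻¹·V_C` (equivalently `q·W = V_C`) and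
`finrank C = finrank ((q⁻¹·P^r) ⧸ W)`. -/
theorem exists_conditions_of_sandwiched (r : ℕ) (hr : 1 ≤ r)
    (W : Submodule ℂ (Fin r → RatFunc ℂ)) (p q : Polynomial ℂ)
    (hp : p ≠ 0) (hq : q ≠ 0)
    (hpW : scaleSub r (algebraMap (Polynomial ℂ) (RatFunc ℂ) p)
      (polySubmodule r) ≤ W)
    (hWq : W ≤ scaleSub r (algebraMap (Polynomial ℂ) (RatFunc ℂ) q)⁻¹
      (polySubmodule r)) :
    letI qinvP : Submodule ℂ (Fin r → RatFunc ℂ) :=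
      scaleSub r (algebraMap (Polynomial ℂ) (RatFunc ℂ) q)⁻¹ (polySubmodule r)
    ∃ C : Submodule ℂ (Module.Dual ℂ (Fin r → Polynomial ℂ)),
      C ≤ conditionsSpace r ∧ FiniteDimensional ℂ C ∧
      W = scaleSub r (algebraMap (Polynomial ℂ) (RatFunc ℂ) q)⁻¹
            (annihilatorInRat r C) ∧
      scaleSub r (algebraMap (Polynomial ℂ) (RatFunc ℂ) q) W =
        annihilatorInRat r C ∧
      Module.finrank ℂ C =
        Module.finrank ℂ (↥qinvP ⧸ Submodule.comap qinvP.subtype W) :=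
  exists_conditions_of_sandwiched_general r W p q hp hq hpW hWq
end

section
/- Let λ, t ∈ ℂ, let S ≥ 1 be an integer, let a : Fin S → ℂ, and set φ := Σ_{s ∈ Fin S} (a s)·X^s ∈ Polynomial ℂ. Then for every j ∈ ℕ: Σ_{s ∈ Fin S} a s * iteratedDeriv s (fun z => z^j * Complex.exp (t*z)) λ = Complex.exp (t*λ) * Polynomial.eval t ((T_λ)^[j] φ). -/
/-!
By the product rule, `d/dz (p(z) e^{tz}) = (T_t p)(z) e^{tz}`, so the `s`-th derivative of
`z^j e^{tz}` at `λ` is `e^{tλ} · ((T_t)^s X^j)(λ)`. Expanding `(T_c)^n = Σ_k C(n,k) c^{n-k} D^k`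
gives `((T_c)^n X^m)(d) = Σ_k C(n,k) m^{(k)} c^{n-k} d^{m-k}`, and since
`C(n,k) m^{(k)} = k! C(n,k) C(m,k) = C(m,k) n^{(k)}` this is symmetric under `(c,n) ↔ (d,m)`.
Hence `((T_t)^s X^j)(λ) = ((T_λ)^j X^s)(t)`, and the theorem follows by linearity in `φ`.
-/

open Polynomial

/-- The ℂ-linear operator `T_λ` on `ℂ[X]`, `T_λ(φ) = φ' + λ•φ`. -/
noncomputable def Tlam (l : ℂ) : Polynomial ℂ →ₗ[ℂ] Polynomial ℂ :=
  (Polynomial.derivative : Polynomial ℂ →ₗ[ℂ] Polynomial ℂ) + l • LinearMap.id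

theorem Nat.choose_mul_descFactorial_comm (n m k : ℕ) :
    n.choose k * m.descFactorial k = m.choose k * n.descFactorial k := by
  rw [Nat.descFactorial_eq_factorial_mul_choose, Nat.descFactorial_eq_factorial_mul_choose]
  ring

lemma Tlam_pow_apply (c : ℂ) (n : ℕ) (p : ℂ[X]) :
    (Tlam c ^ n) p = ∑ k ∈ Finset.range (n + 1),
      ((n.choose k : ℂ) * c ^ (n - k)) • derivative^[k] p := by
  have hcomm : Commute (derivative : Module.End ℂ ℂ[X]) (c • 1) :=
    (Commute.one_right _).smul_right c
  rw [show Tlam c = (derivative : Module.End ℂ ℂ[X]) + c • 1 from rfl, hcomm.add_pow]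
  simp only [LinearMap.sum_apply, Module.End.mul_apply, _root_.smul_pow, one_pow,
    Module.End.pow_apply, Module.End.natCast_apply, LinearMap.smul_apply, Module.End.one_apply,
    iterate_derivative_smul]
  refine Finset.sum_congr rfl fun k _ => ?_
  rw [mul_comm, ← Nat.cast_smul_eq_nsmul ℂ (n.choose k), smul_smul, mul_comm]

/-- The range is chosen symmetric in `n` and `m`: the `k`-th term vanishes once `k > n`
(binomial) or `k > m` (falling factorial). -/
lemma eval_Tlam_pow_X_pow (c d : ℂ) (n m : ℕ) :
    ((Tlam c ^ n) (X ^ m)).eval d = ∑ k ∈ Finset.range (n + m + 1),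
      ((n.choose k * m.descFactorial k : ℕ) : ℂ) * c ^ (n - k) * d ^ (m - k) := by
  rw [Tlam_pow_apply,
    ← Finset.sum_subset (Finset.range_subset_range.2 (by omega : n + 1 ≤ n + m + 1))]
  · simp only [iterate_derivative_X_pow_eq_smul, eval_finsetSum, eval_smul, eval_pow, eval_X,
      smul_eq_mul, Nat.cast_mul]
    refine Finset.sum_congr rfl fun k _ => ?_
    ring
  · intro k _ hk
    rw [Finset.mem_range, not_lt] at hk
    simp [Nat.choose_eq_zero_of_lt (by omega : n < k)]

lemma eval_Tlam_pow_X_pow_comm (c d : ℂ) (n m : ℕ) :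
    ((Tlam c ^ n) (X ^ m)).eval d = ((Tlam d ^ m) (X ^ n)).eval c := by
  rw [eval_Tlam_pow_X_pow, eval_Tlam_pow_X_pow, add_comm m n]
  refine Finset.sum_congr rfl fun k _ => ?_
  rw [Nat.choose_mul_descFactorial_comm]
  ring

lemma hasDerivAt_eval_mul_exp (t : ℂ) (p : ℂ[X]) (z : ℂ) :
    HasDerivAt (fun z => p.eval z * Complex.exp (t * z))
      ((Tlam t p).eval z * Complex.exp (t * z)) z := by
  have hexp : HasDerivAt (fun z => Complex.exp (t * z)) (Complex.exp (t * z) * t) z := by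
    simpa using ((hasDerivAt_id z).const_mul t).cexp
  refine ((p.hasDerivAt z).mul hexp).congr_deriv ?_
  simp only [Tlam, LinearMap.add_apply, LinearMap.smul_apply, LinearMap.id_apply, eval_add,
    eval_smul, smul_eq_mul]
  ring

lemma iteratedDeriv_eval_mul_exp (t : ℂ) (n : ℕ) (p : ℂ[X]) (c : ℂ) :
    iteratedDeriv n (fun z => p.eval z * Complex.exp (t * z)) c
      = ((Tlam t ^ n) p).eval c * Complex.exp (t * c) := by
  induction n generalizing p with
  | zero => simp
  | succ n ih =>
    rw [iteratedDeriv_succ', funext fun z => (hasDerivAt_eval_mul_exp t p z).deriv, ih,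
      pow_succ, Module.End.mul_apply]

theorem sum_iteratedDeriv_exp_eq_eval_Tlam_iterate_general (l t : ℂ) (S : ℕ)
    (a : Fin S → ℂ) (φ : Polynomial ℂ)
    (hφ : φ = ∑ s : Fin S, a s • (Polynomial.X : Polynomial ℂ) ^ (s : ℕ))
    (j : ℕ) :
    ∑ s : Fin S, a s *
        iteratedDeriv (s : ℕ) (fun z : ℂ => z ^ j * Complex.exp (t * z)) l
      = Complex.exp (t * l) * Polynomial.eval t ((Tlam l ^ j) φ) := by
  subst hφ
  simp only [map_sum, map_smul, eval_finsetSum, eval_smul, smul_eq_mul, Finset.mul_sum]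
  refine Finset.sum_congr rfl fun s _ => ?_
  have h := iteratedDeriv_eval_mul_exp t s (X ^ j) l
  simp only [eval_pow, eval_X] at h
  rw [h, eval_Tlam_pow_X_pow_comm]
  ring

/-- for `φ = Σ_{s<S} a_s X^s` and every `j ∈ ℕ`,
`Σ_{s<S} a_s · d^s/dz^s (z^j e^{tz})|_{z=λ} = e^{tλ} · ((T_λ)^j φ)(t)`. -/
theorem sum_iteratedDeriv_exp_eq_eval_Tlam_iterate (l t : ℂ) (S : ℕ)
    (hS : 1 ≤ S) (a : Fin S → ℂ) (φ : Polynomial ℂ)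
    (hφ : φ = ∑ s : Fin S, a s • (Polynomial.X : Polynomial ℂ) ^ (s : ℕ))
    (j : ℕ) :
    ∑ s : Fin S, a s *
        iteratedDeriv (s : ℕ) (fun z : ℂ => z ^ j * Complex.exp (t * z)) l
      = Complex.exp (t * l) * Polynomial.eval t ((Tlam l ^ j) φ) :=
  sum_iteratedDeriv_exp_eq_eval_Tlam_iterate_general l t S a φ hφ j
end

section
/- Fix integers r ≥ 1, d ≥ 1, S ≥ 1, a point λ ∈ ℂ, coefficients a : Fin (d*r) → Fin r → Fin S → ℂ, an index α ∈ Fin r, and ζ ∈ ℂ with ζ ≠ 0 and ζ ≠ λ; set φ i γ := Σ_{s ∈ Fin S} (a i γ s)·X^s ∈ Polynomial ℂ. For t : Fin r → ℂ let N(t) be the (d·r)×(d·r) complex matrix with rows indexed by (j,γ) ∈ Fin d × Fin r and columns indexed by i ∈ Fin (d*r), with entries N(t)_{(j,γ),i} := Σ_{s ∈ Fin S} a i γ s * iteratedDeriv s (fun z => z^j * (1 − (if γ = α then z/ζ else 0)) * Complex.exp ((t γ)*z)) λ. Then det N(t) = (1 − λ/ζ)^d * Complex.exp (d*λ*(Σ_{γ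 ∈ Fin r} t γ)) * det of the matrix whose ((j,γ),i) entry is Polynomial.eval (t γ) ((T_λ)^[j] (φ i γ − (if γ = α then (ζ−λ)⁻¹ • Polynomial.derivative (φ i γ) else 0))). -/
open Polynomial

/-!
Row `(j, γ)` of `N(t)` pairs the coefficients of `φ i γ` with the derivatives at `λ` of
`z ↦ z^j (1 - c_γ z) e^{t_γ z}`, where `c_α = ζ⁻¹` and `c_γ = 0` otherwise. Differentiating
`P(z) e^{τ z}` acts on `P` by `T_τ`, and the pairing `(T_τ^s X^j)(λ) = (T_λ^j X^s)(τ)` (both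
sides are `∂_z^s ∂_w^j e^{zw}` at `(λ, τ)`) moves all derivatives onto `φ i γ`. Hence every
entry of row `(j, γ)` is `e^{t_γ λ} (T_λ^j (φ - c_γ T_λ φ))(t_γ)`, and
`φ - ζ⁻¹ T_λ φ = (1 - λ/ζ)(φ - (ζ - λ)⁻¹ φ')`. Pulling the row factors out of the determinant
gives the claim.
-/

namespace Tlam

variable (l : ℂ)

lemma apply (p : ℂ[X]) : Tlam l p = derivative p + l • p := rfl

lemma pow_succ_apply (n : ℕ) (p : ℂ[X]) : (Tlam l ^ (n + 1)) p = Tlam l ((Tlam l ^ n) p) := by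
  rw [pow_succ', Module.End.mul_apply]

lemma pow_apply_one (j : ℕ) : (Tlam l ^ j) 1 = C (l ^ j) := by
  induction j with
  | zero => simp
  | succ j ih => simp [ih, apply, smul_eq_C_mul, pow_succ', C_mul]

lemma apply_X_mul (p : ℂ[X]) : Tlam l (X * p) = X * Tlam l p + p := by
  simp only [apply, derivative_mul, derivative_X, one_mul, smul_eq_C_mul]
  ring

lemma pow_succ_apply_X_mul (n : ℕ) (p : ℂ[X]) :
    (Tlam l ^ (n + 1)) (X * p) = X * (Tlam l ^ (n + 1)) p + ((n + 1 : ℕ) : ℂ) • (Tlam l ^ n) p := by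
  induction n generalizing p with
  | zero => simpa using apply_X_mul l p
  | succ n ih =>
    rw [pow_succ_apply, ih, map_add, map_smul, apply_X_mul, ← pow_succ_apply,
      ← pow_succ_apply]
    simp only [smul_eq_C_mul, Nat.cast_add, Nat.cast_one, C_add, C_1]
    ring

lemma eval_pow_apply_X_pow_comm (τ : ℂ) (s j : ℕ) :
    ((Tlam τ ^ s) (X ^ j)).eval l = ((Tlam l ^ j) (X ^ s)).eval τ := by
  induction s generalizing j with
  | zero => simp [pow_apply_one]
  | succ s ih =>
    rw [pow_succ, Module.End.mul_apply, apply, derivative_X_pow, C_mul', map_add, map_smul,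
      map_smul, eval_add, eval_smul, eval_smul, smul_eq_mul, smul_eq_mul, ih, ih, pow_succ']
    cases j with
    | zero => simp
    | succ k =>
      rw [pow_succ_apply_X_mul, eval_add, eval_smul, eval_mul, eval_X, smul_eq_mul,
        Nat.add_sub_cancel]
      push_cast
      ring

lemma sum_mul_eval_pow_apply_X_pow {ι : Type*} (A : Finset ι) (a : ι → ℂ) (e : ι → ℕ)
    (τ : ℂ) (j : ℕ) :
    ∑ s ∈ A, a s * ((Tlam τ ^ e s) (X ^ j)).eval l
      = ((Tlam l ^ j) (∑ s ∈ A, a s • X ^ e s)).eval τ := by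
  simp only [map_sum, map_smul, eval_finsetSum, eval_smul, smul_eq_mul,
    eval_pow_apply_X_pow_comm]

lemma sub_inv_smul_apply_eq {ζ : ℂ} (hζ0 : ζ ≠ 0) (hζl : ζ ≠ l) (φ : ℂ[X]) :
    φ - ζ⁻¹ • Tlam l φ = (1 - l / ζ) • (φ - (ζ - l)⁻¹ • derivative φ) := by
  have hcoef : (1 - l / ζ) * (ζ - l)⁻¹ = ζ⁻¹ := by
    field_simp [sub_ne_zero.mpr hζl]
  rw [apply, smul_sub, smul_smul, hcoef]
  module

end Tlam

open Complex

lemma deriv_eval_mul_cexp (τ : ℂ) (P : ℂ[X]) :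
    deriv (fun z => P.eval z * cexp (τ * z)) = fun z => (Tlam τ P).eval z * cexp (τ * z) := by
  funext z
  have hexp : HasDerivAt (fun z => cexp (τ * z)) (cexp (τ * z) * τ) z := by
    simpa using ((hasDerivAt_id z).const_mul τ).cexp
  refine ((P.hasDerivAt z).mul hexp).deriv.trans ?_
  rw [Tlam.apply, eval_add, eval_smul, smul_eq_mul]
  ring

lemma iteratedDeriv_eval_mul_cexp (τ : ℂ) (P : ℂ[X]) (s : ℕ) :
    iteratedDeriv s (fun z => P.eval z * cexp (τ * z))
      = fun z => ((Tlam τ ^ s) P).eval z * cexp (τ * z) := by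
  induction s with
  | zero => simp
  | succ s ih => rw [iteratedDeriv_succ, ih, deriv_eval_mul_cexp, Tlam.pow_succ_apply]

lemma sum_mul_iteratedDeriv_pow_mul_cexp {ι : Type*} (A : Finset ι) (a : ι → ℂ) (e : ι → ℕ)
    (l τ c : ℂ) (j : ℕ) :
    ∑ s ∈ A, a s * iteratedDeriv (e s) (fun z => z ^ j * (1 - c * z) * cexp (τ * z)) l
      = cexp (τ * l) * ((Tlam l ^ j) (∑ s ∈ A, a s • X ^ e s
          - c • Tlam l (∑ s ∈ A, a s • X ^ e s))).eval τ := by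
  have hpoly : (fun z => z ^ j * (1 - c * z) * cexp (τ * z))
      = fun z => (X ^ j - c • X ^ (j + 1) : ℂ[X]).eval z * cexp (τ * z) := by
    funext z
    simp only [eval_sub, eval_smul, eval_pow, eval_X, smul_eq_mul]
    ring
  simp only [hpoly, iteratedDeriv_eval_mul_cexp]
  rw [map_sub, map_smul, ← Module.End.mul_apply, ← pow_succ,
    eval_sub, eval_smul, smul_eq_mul, ← Tlam.sum_mul_eval_pow_apply_X_pow,
    ← Tlam.sum_mul_eval_pow_apply_X_pow, Finset.mul_sum, mul_sub, Finset.mul_sum,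
    Finset.mul_sum, ← Finset.sum_sub_distrib]
  simp only [map_sub, map_smul, eval_sub, eval_smul, smul_eq_mul]
  refine Finset.sum_congr rfl fun s _ => ?_
  ring

lemma prod_ite_mul_cexp (d : ℕ) {r : ℕ} (α : Fin r) (u l : ℂ) (t : Fin r → ℂ) :
    ∏ p : Fin d × Fin r, (if p.2 = α then u else 1) * cexp (t p.2 * l)
      = u ^ d * cexp (d * l * ∑ γ, t γ) := by
  rw [Finset.prod_mul_distrib, Fintype.prod_prod_type, Fintype.prod_prod_type]
  simp only [← exp_sum, Finset.prod_ite_eq', Finset.mem_univ, if_true, Finset.prod_const,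
    Finset.card_univ, Fintype.card_fin, ← Finset.sum_mul, ← exp_nat_mul]
  ring_nf

theorem det_onePoint_shifted_tau_general (r d S : ℕ) (l : ℂ) (a : Fin (d * r) → Fin r → Fin S → ℂ)
    (α : Fin r) (ζ : ℂ) (hζ0 : ζ ≠ 0) (hζl : ζ ≠ l)
    (φ : Fin (d * r) → Fin r → Polynomial ℂ)
    (hφ : ∀ i γ, φ i γ = ∑ s : Fin S, a i γ s • (X : Polynomial ℂ) ^ (s : ℕ))
    (N : (Fin r → ℂ) → Matrix (Fin d × Fin r) (Fin d × Fin r) ℂ)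
    (hN : ∀ (t : Fin r → ℂ) (p q : Fin d × Fin r),
      N t p q = ∑ s : Fin S, a (finProdFinEquiv q) p.2 s *
        iteratedDeriv (s : ℕ)
          (fun z : ℂ => z ^ (p.1 : ℕ) * (1 - (if p.2 = α then z / ζ else 0)) *
            Complex.exp (t p.2 * z)) l) :
    ∀ t : Fin r → ℂ,
      (N t).det = (1 - l / ζ) ^ d *
        Complex.exp ((d : ℂ) * l * ∑ γ : Fin r, t γ) *
        (Matrix.of fun p q : Fin d × Fin r =>
          Polynomial.eval (t p.2)
            ((Tlam l ^ (p.1 : ℕ))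
              (φ (finProdFinEquiv q) p.2 -
                (if p.2 = α then
                  (ζ - l)⁻¹ • Polynomial.derivative (φ (finProdFinEquiv q) p.2)
                 else 0)))).det := by
  intro t
  rw [← prod_ite_mul_cexp d α, ← Matrix.det_mul_column]
  congr 1
  ext ⟨j, γ⟩ q
  have hlinear : (fun z : ℂ => z ^ (j : ℕ) * (1 - (if γ = α then z / ζ else 0)) * cexp (t γ * z))
      = fun z => z ^ (j : ℕ) * (1 - (if γ = α then ζ⁻¹ else 0) * z) * cexp (t γ * z) := by
    funext z
    split_ifs <;> ring
  simp only [Matrix.of_apply]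
  rw [hN, hlinear, sum_mul_iteratedDeriv_pow_mul_cexp, ← hφ]
  split_ifs
  · rw [Tlam.sub_inv_smul_apply_eq l hζ0 hζl, map_smul, eval_smul, smul_eq_mul]
    ring
  · simp only [zero_smul, sub_zero, one_mul]

/-- for `ζ ≠ 0`, `ζ ≠ λ`, the determinant of the matrix
`N(t)_{(j,γ),i} = Σ_s a i γ s · d^s/dz^s (z^j (1 − δ_{γα} z/ζ) e^{t_γ z})|_{z=λ}`
equals `(1 − λ/ζ)^d · exp(d·λ·Σ_γ t_γ)` times the determinant of the matrix
with entries `((T_λ)^j (φ i γ − δ_{γα} (ζ−λ)⁻¹·(φ i γ)')).eval (t_γ)`. -/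
theorem det_onePoint_shifted_tau (r d S : ℕ) (hr : 1 ≤ r) (hd : 1 ≤ d)
    (hS : 1 ≤ S) (l : ℂ) (a : Fin (d * r) → Fin r → Fin S → ℂ)
    (α : Fin r) (ζ : ℂ) (hζ0 : ζ ≠ 0) (hζl : ζ ≠ l)
    (φ : Fin (d * r) → Fin r → Polynomial ℂ)
    (hφ : ∀ i γ, φ i γ = ∑ s : Fin S, a i γ s • (X : Polynomial ℂ) ^ (s : ℕ))
    (N : (Fin r → ℂ) → Matrix (Fin d × Fin r) (Fin d × Fin r) ℂ)
    (hN : ∀ (t : Fin r → ℂ) (p q : Fin d × Fin r),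
      N t p q = ∑ s : Fin S, a (finProdFinEquiv q) p.2 s *
        iteratedDeriv (s : ℕ)
          (fun z : ℂ => z ^ (p.1 : ℕ) * (1 - (if p.2 = α then z / ζ else 0)) *
            Complex.exp (t p.2 * z)) l) :
    ∀ t : Fin r → ℂ,
      (N t).det = (1 - l / ζ) ^ d *
        Complex.exp ((d : ℂ) * l * ∑ γ : Fin r, t γ) *
        (Matrix.of fun p q : Fin d × Fin r =>
          Polynomial.eval (t p.2)
            ((Tlam l ^ (p.1 : ℕ))
              (φ (finProdFinEquiv q) p.2 -
                (if p.2 = α then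
                  (ζ - l)⁻¹ • Polynomial.derivative (φ (finProdFinEquiv q) p.2)
                 else 0)))).det :=
  det_onePoint_shifted_tau_general r d S l a α ζ hζ0 hζl φ hφ N hN
end
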